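/- For every fixed number N ≥ 2 of relays and every M > 0, there exist a rate R_s > 0 and marginal cost functions λ_1,…,λ_N : [0,R_s] → ℝ, each positive, continuous, strictly increasing, and convex, such that the resulting oligopoly pricing game has an equilibrium whose induced cost is at least M times the socially optimal cost. -/

import Mathlib

open Finset MeasureTheory intervalIntegral Set

/-- Virtual-competitor cost function: the minimal total cost of splitting traffic `t`
among the relays other than `i`, given pricing functions `B`. -/
noncomputable def Bhat (N : ℕ) (B : Fin N → ℝ → ℝ) (i : Fin N) (t : ℝ) : ℝ :=
  sInf {c : ℝ | ∃ g : Fin N → ℝ, (∀ j, 0 ≤ g j) ∧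
    (∑ j ∈ Finset.univ.erase i, g j) = t ∧ c = ∑ j ∈ Finset.univ.erase i, B j (g j)}

/-- A routing of total rate `Rs` among `N` relays. -/
def IsRouting (N : ℕ) (Rs : ℝ) (f : Fin N → ℝ) : Prop :=
  (∀ i, 0 ≤ f i) ∧ (∑ i, f i) = Rs

/-- The network cost of a routing. -/
noncomputable def totalCost (N : ℕ) (lam : Fin N → ℝ → ℝ) (f : Fin N → ℝ) : ℝ :=
  ∑ i, ∫ r in (0:ℝ)..(f i), lam i r

/-- The socially optimal routing: a routing of minimum cost. -/
def IsSociallyOptimal (N : ℕ) (Rs : ℝ) (lam : Fin N → ℝ → ℝ) (f : Fin N → ℝ) : Prop :=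
  IsRouting N Rs f ∧ ∀ g, IsRouting N Rs g → totalCost N lam f ≤ totalCost N lam g

/-- An oligopoly pricing game: at least two relays, positive rate, and marginal cost
functions that are positive, continuous and strictly increasing on `[0, Rs]`. -/
def IsOligopoly (N : ℕ) (Rs : ℝ) (lam : Fin N → ℝ → ℝ) : Prop :=
  2 ≤ N ∧ 0 < Rs ∧ ∀ i,
    (∀ t ∈ Set.Icc (0:ℝ) Rs, 0 < lam i t) ∧
    ContinuousOn (lam i) (Set.Icc 0 Rs) ∧
    StrictMonoOn (lam i) (Set.Icc 0 Rs)

/-- A pricing profile: each relay's pricing function is continuous, nondecreasing,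
and vanishes at `0`. -/
def IsPricingProfile (N : ℕ) (Rs : ℝ) (B : Fin N → ℝ → ℝ) : Prop :=
  ∀ i, ContinuousOn (B i) (Set.Icc 0 Rs) ∧ MonotoneOn (B i) (Set.Icc 0 Rs) ∧ B i 0 = 0

/-- Equilibrium of the oligopoly pricing game. -/
def IsEquilibrium (N : ℕ) (Rs : ℝ) (lam B : Fin N → ℝ → ℝ) (f : Fin N → ℝ) : Prop :=
  IsPricingProfile N Rs B ∧ IsRouting N Rs f ∧
  (∀ g, IsRouting N Rs g → (∑ i, B i (f i)) ≤ ∑ i, B i (g i)) ∧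
  (∀ i, ∀ t ∈ Set.Icc (0:ℝ) Rs, Bhat N B i Rs - Bhat N B i (Rs - t) ≤ B i t) ∧
  (∀ i, B i (f i) = Bhat N B i Rs - Bhat N B i (Rs - f i)) ∧
  (∀ i, ∀ t ∈ Set.Icc (0:ℝ) Rs,
    Bhat N B i Rs - Bhat N B i (Rs - t) - (∫ r in (0:ℝ)..t, lam i r) ≤
    Bhat N B i Rs - Bhat N B i (Rs - f i) - ∫ r in (0:ℝ)..(f i), lam i r)

/-- A function having one-sided derivatives: a right derivative at every point of
`[0, Rs)` and a left derivative at every point of `(0, Rs]`. -/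
def HasOneSidedDerivs (Rs : ℝ) (F : ℝ → ℝ) : Prop :=
  (∀ t ∈ Set.Ico (0:ℝ) Rs, ∃ d, HasDerivWithinAt F d (Set.Ici t) t) ∧
  (∀ t ∈ Set.Ioc (0:ℝ) Rs, ∃ d, HasDerivWithinAt F d (Set.Iic t) t)

/-!
Let every relay have marginal cost `c + t ^ n` on `[0, 1]`, with cost `Λ`, and let every
relay charge `B t = Λ 1 - Λ (1 - t)` (`tailCost`), the cost of the last `t` units of traffic.
Convexity of `Λ` makes `B` subadditive, so the virtual competitor of a relay is `B` itself,
and `B 1 - B (1 - t) = Λ t` makes each relay's profit identically zero. Hence routing all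
traffic through one relay is an equilibrium; it costs `Λ 1 ≥ 1 / (n + 1)`, while the socially
optimal uniform split costs `c + 1 / ((n + 1) N ^ n)`, which is `2 c` for
`c = 1 / ((n + 1) N ^ n)` and is negligible against `1 / (n + 1)` once `N ^ n` is large.
-/

theorem ConvexOn.add_le_add_of_add_eq {s : Set ℝ} {f : ℝ → ℝ} (hf : ConvexOn ℝ s f)
    {a b p q : ℝ} (ha : a ∈ s) (hb : b ∈ s) (hp : p ∈ Icc a b) (hpq : p + q = a + b) :
    f p + f q ≤ f a + f b := by
  rcases hp.1.eq_or_lt with rfl | hap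
  · obtain rfl : q = b := by linarith
    rfl
  have hab : 0 < b - a := by linarith [hp.2]
  have hab' : b - a ≠ 0 := hab.ne'
  have interpolate : ∀ x ∈ Icc a b,
      f x ≤ (b - x) / (b - a) * f a + (x - a) / (b - a) * f b := by
    intro x hx
    have h := hf.2 ha hb (div_nonneg (sub_nonneg.2 hx.2) hab.le)
      (div_nonneg (sub_nonneg.2 hx.1) hab.le) (by rw [← add_div, div_eq_one_iff_eq hab']; ring)
    simp only [smul_eq_mul] at h
    have hcomb : (b - x) / (b - a) * a + (x - a) / (b - a) * b = x := by
      field_simp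
      ring
    rwa [hcomb] at h
  obtain rfl : q = a + b - p := by linarith
  have hq : a + b - p ∈ Icc a b := ⟨by linarith [hp.2], by linarith [hp.1]⟩
  have hsum : (b - p) / (b - a) * f a + (p - a) / (b - a) * f b +
      ((b - (a + b - p)) / (b - a) * f a + (a + b - p - a) / (b - a) * f b) = f a + f b := by
    field_simp
    ring
  linarith [interpolate p hp, interpolate _ hq]

theorem Finset.le_sum_of_subadditiveOn_Icc {ι : Type*} {F : ℝ → ℝ} {R : ℝ}
    (h0 : F 0 = 0)
    (hadd : ∀ x y, 0 ≤ x → 0 ≤ y → x + y ≤ R → F (x + y) ≤ F x + F y)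
    (s : Finset ι) {g : ι → ℝ} (hg : ∀ j, 0 ≤ g j) (hs : ∑ j ∈ s, g j ≤ R) :
    F (∑ j ∈ s, g j) ≤ ∑ j ∈ s, F (g j) := by
  induction s using Finset.cons_induction with
  | empty => simp [h0]
  | cons a s ha ih =>
    rw [Finset.sum_cons] at hs ⊢
    rw [Finset.sum_cons]
    have hrest : 0 ≤ ∑ j ∈ s, g j := Finset.sum_nonneg fun j _ => hg j
    linarith [hadd _ _ (hg a) hrest hs, ih (by linarith [hg a])]

theorem Bhat_const_eq_of_subadditiveOn_Icc {N : ℕ} (hN : 2 ≤ N) {F : ℝ → ℝ} {R : ℝ}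
    (h0 : F 0 = 0)
    (hadd : ∀ x y, 0 ≤ x → 0 ≤ y → x + y ≤ R → F (x + y) ≤ F x + F y)
    (i : Fin N) {t : ℝ} (ht : t ∈ Icc 0 R) :
    Bhat N (fun _ => F) i t = F t := by
  obtain ⟨j, hj⟩ := Fintype.exists_ne_of_one_lt_card (by rw [Fintype.card_fin]; omega) i
  have hjmem : j ∈ Finset.univ.erase i := Finset.mem_erase.2 ⟨hj, Finset.mem_univ _⟩
  apply IsLeast.csInf_eq
  constructor
  · refine ⟨Pi.single j t, fun l => ?_, ?_, ?_⟩
    · by_cases hl : l = j <;> simp [hl, ht.1]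
    · simp [Finset.sum_pi_single', hjmem]
    · rw [Finset.sum_eq_single_of_mem j hjmem fun l _ hl => by simp [hl, h0]]
      simp
  · rintro _ ⟨g, hg, rfl, rfl⟩
    exact Finset.le_sum_of_subadditiveOn_Icc h0 hadd _ hg ht.2

theorem IsRouting.mem_Icc {N : ℕ} {R : ℝ} {g : Fin N → ℝ} (hg : IsRouting N R g)
    (i : Fin N) : g i ∈ Icc 0 R :=
  ⟨hg.1 i, hg.2 ▸ Finset.single_le_sum (fun j _ => hg.1 j) (Finset.mem_univ i)⟩

theorem totalCost_pi_single {N : ℕ} (ℓ : ℝ → ℝ) (i : Fin N) (x : ℝ) :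
    totalCost N (fun _ => ℓ) (Pi.single i x) = ∫ r in (0:ℝ)..x, ℓ r := by
  rw [totalCost, Fintype.sum_eq_single i fun j hj => by simp [hj]]
  simp

theorem totalCost_const {N : ℕ} (ℓ : ℝ → ℝ) (x : ℝ) :
    totalCost N (fun _ => ℓ) (fun _ => x) = N * ∫ r in (0:ℝ)..x, ℓ r := by
  simp [totalCost]

def tailCost (L : ℝ → ℝ) (R t : ℝ) : ℝ := L R - L (R - t)

section

variable {L : ℝ → ℝ} {R : ℝ}

@[simp]
theorem tailCost_zero : tailCost L R 0 = 0 := by simp [tailCost]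

theorem tailCost_sub_tailCost_sub (t : ℝ) :
    tailCost L R R - tailCost L R (R - t) = L t - L 0 := by
  simp only [tailCost, sub_self, sub_sub_cancel]
  ring

theorem tailCost_add_le (hL : ConvexOn ℝ (Icc 0 R) L) {x y : ℝ} (hx : 0 ≤ x) (hy : 0 ≤ y)
    (hxy : x + y ≤ R) : tailCost L R (x + y) ≤ tailCost L R x + tailCost L R y := by
  have hR : 0 ≤ R := by linarith
  have h := hL.add_le_add_of_add_eq (a := R - x - y) (b := R) (p := R - x) (q := R - y)
    ⟨by linarith, by linarith⟩ ⟨hR, le_rfl⟩ ⟨by linarith, by linarith⟩ (by ring)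
  simp only [tailCost, ← sub_sub]
  linarith

theorem Bhat_tailCost {N : ℕ} (hN : 2 ≤ N) (hL : ConvexOn ℝ (Icc 0 R) L) (i : Fin N) {t : ℝ}
    (ht : t ∈ Icc 0 R) : Bhat N (fun _ => tailCost L R) i t = tailCost L R t :=
  Bhat_const_eq_of_subadditiveOn_Icc hN tailCost_zero (fun _ _ => tailCost_add_le hL) i ht

variable {N : ℕ} {ℓ : ℝ → ℝ}

theorem isSociallyOptimal_uniform (hN : N ≠ 0)
    (hcost : ∀ x ∈ Icc 0 R, ∫ r in (0:ℝ)..x, ℓ r = L x) (hL : ConvexOn ℝ (Icc 0 R) L)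
    (hR : 0 ≤ R) : IsSociallyOptimal N R (fun _ => ℓ) (fun _ => R / N) := by
  have hN' : (0 : ℝ) < N := by positivity
  have hRN : R / N ∈ Icc 0 R := ⟨by positivity, div_le_self hR (by exact_mod_cast hN')⟩
  refine ⟨⟨fun _ => by positivity, by simp [field]⟩, fun g hg => ?_⟩
  have jensen := hL.map_sum_le (t := Finset.univ) (w := fun _ => (N : ℝ)⁻¹) (p := g)
    (fun _ _ => by positivity) (by simp [field]) fun i _ => hg.mem_Icc i
  simp only [smul_eq_mul, ← Finset.mul_sum, hg.2] at jensen
  rw [totalCost_const, hcost _ hRN, totalCost]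
  rw [Finset.sum_congr rfl fun i _ => hcost _ (hg.mem_Icc i)]
  calc N * L (R / N) = N * L ((N : ℝ)⁻¹ * R) := by rw [div_eq_inv_mul]
    _ ≤ N * ((N : ℝ)⁻¹ * ∑ i, L (g i)) := by gcongr
    _ = ∑ i, L (g i) := by field_simp

theorem isEquilibrium_pi_single_tailCost (hN : 2 ≤ N)
    (hcost : ∀ x ∈ Icc 0 R, ∫ r in (0:ℝ)..x, ℓ r = L x) (hL : ConvexOn ℝ (Icc 0 R) L)
    (hLmono : MonotoneOn L (Icc 0 R)) (hLcont : ContinuousOn L (Icc 0 R)) (hR : 0 ≤ R)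
    (i₀ : Fin N) :
    IsEquilibrium N R (fun _ => ℓ) (fun _ => tailCost L R) (Pi.single i₀ R) := by
  have hR' : R ∈ Icc 0 R := ⟨hR, le_rfl⟩
  have hL0 : L 0 = 0 := by simpa using (hcost 0 ⟨le_rfl, hR⟩).symm
  have hcompl : ∀ t ∈ Icc 0 R, R - t ∈ Icc 0 R := fun t ht =>
    ⟨by linarith [ht.2], by linarith [ht.1]⟩
  have hsingle : ∀ i, (Pi.single i₀ R : Fin N → ℝ) i ∈ Icc 0 R := fun i => by
    by_cases hi : i = i₀ <;> simp [hi, hR]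
  have hBhat : ∀ i, ∀ t ∈ Icc 0 R,
      Bhat N (fun _ => tailCost L R) i R - Bhat N (fun _ => tailCost L R) i (R - t) = L t := by
    intro i t ht
    rw [Bhat_tailCost hN hL i hR', Bhat_tailCost hN hL i (hcompl t ht),
      tailCost_sub_tailCost_sub, hL0, sub_zero]
  have hrouting : IsRouting N R (Pi.single i₀ R) :=
    ⟨fun i => (hsingle i).1, by simp [Finset.sum_pi_single']⟩
  refine ⟨fun _ => ⟨?_, ?_, tailCost_zero⟩, hrouting, fun g hg => ?_, fun i t ht => ?_,
    fun i => ?_, fun i t ht => ?_⟩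
  · exact continuousOn_const.sub (hLcont.comp (continuousOn_const.sub continuousOn_id) hcompl)
  · intro x hx y hy hxy
    exact sub_le_sub_left (hLmono (hcompl y hy) (hcompl x hx) (by linarith)) _
  · rw [Fintype.sum_eq_single i₀ fun i hi => by simp [hi], Pi.single_eq_same]
    have h := Finset.le_sum_of_subadditiveOn_Icc tailCost_zero
      (fun _ _ => tailCost_add_le hL) _ hg.1 hg.2.le
    rwa [hg.2] at h
  · rw [hBhat i t ht]
    have h := tailCost_add_le hL (sub_nonneg.2 ht.2) ht.1 (by linarith)
    rw [sub_add_cancel] at h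
    linarith [tailCost_sub_tailCost_sub (L := L) (R := R) t]
  · rw [hBhat i _ (hsingle i)]
    by_cases hi : i = i₀
    · simp [hi, tailCost, hL0]
    · simp [hi, hL0]
  · rw [hBhat i t ht, hBhat i _ (hsingle i), hcost t ht, hcost _ (hsingle i)]
    simp

end

noncomputable def polyCost (c : ℝ) (n : ℕ) (x : ℝ) : ℝ := c * x + x ^ (n + 1) / (n + 1)

theorem integral_const_add_pow (c : ℝ) (n : ℕ) (x : ℝ) :
    ∫ r in (0:ℝ)..x, (c + r ^ n) = polyCost c n x := by
  rw [intervalIntegral.integral_add intervalIntegrable_const (intervalIntegrable_pow n),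
    intervalIntegral.integral_const, integral_pow, polyCost]
  simp
  ring

theorem convexOn_polyCost (c : ℝ) (n : ℕ) : ConvexOn ℝ (Ici 0) (polyCost c n) := by
  have h := ((LinearMap.mulLeft ℝ c).convexOn (convex_Ici 0)).add
    ((convexOn_pow (n + 1)).smul (c := ((n : ℝ) + 1)⁻¹) (by positivity))
  refine h.congr fun x _ => ?_
  simp [polyCost, div_eq_inv_mul]

theorem monotoneOn_polyCost {c : ℝ} (hc : 0 ≤ c) (n : ℕ) :
    MonotoneOn (polyCost c n) (Ici 0) := by
  intro x hx y _ hxy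
  have hpow : x ^ (n + 1) ≤ y ^ (n + 1) := pow_le_pow_left₀ hx hxy _
  simp only [polyCost]
  gcongr

theorem continuous_polyCost (c : ℝ) (n : ℕ) : Continuous (polyCost c n) := by
  unfold polyCost
  fun_prop

theorem convex_price_of_anarchy_unbounded_general
    (N : ℕ) (hN : 2 ≤ N) (M : ℝ) :
    ∃ (Rs : ℝ) (lam : Fin N → ℝ → ℝ), 0 < Rs ∧
      (∀ i, (∀ t ∈ Set.Icc (0:ℝ) Rs, 0 < lam i t) ∧
        ContinuousOn (lam i) (Set.Icc 0 Rs) ∧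
        StrictMonoOn (lam i) (Set.Icc 0 Rs) ∧
        ConvexOn ℝ (Set.Icc 0 Rs) (lam i)) ∧
      ∃ (B : Fin N → ℝ → ℝ) (f ropt : Fin N → ℝ),
        IsSociallyOptimal N Rs lam ropt ∧
        IsEquilibrium N Rs lam B f ∧
        M * totalCost N lam ropt ≤ totalCost N lam f := by
  have hN1 : (1 : ℝ) < N := by exact_mod_cast hN
  have hN0 : (N : ℝ) ≠ 0 := by positivity
  obtain ⟨n, hn, hMn⟩ : ∃ n : ℕ, n ≠ 0 ∧ 2 * M ≤ (N : ℝ) ^ n := by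
    obtain ⟨k, hk⟩ := pow_unbounded_of_one_lt (2 * M) hN1
    exact ⟨k + 1, k.succ_ne_zero, hk.le.trans (pow_le_pow_right₀ hN1.le k.le_succ)⟩
  obtain ⟨c, hc, hcN⟩ : ∃ c : ℝ, 0 < c ∧ (n + 1) * N ^ n * c = 1 :=
    ⟨((n + 1) * (N : ℝ) ^ n)⁻¹, by positivity, by field_simp⟩
  have hcost : ∀ x ∈ Icc (0 : ℝ) 1, ∫ r in (0:ℝ)..x, (c + r ^ n) = polyCost c n x :=
    fun x _ => integral_const_add_pow c n x
  have hconv := (convexOn_polyCost c n).subset Icc_subset_Ici_self (convex_Icc 0 1)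
  refine ⟨1, fun _ t => c + t ^ n, one_pos, fun _ => ⟨fun t ht => ?_, by fun_prop, ?_, ?_⟩,
    fun _ => tailCost (polyCost c n) 1, Pi.single ⟨0, by omega⟩ 1, fun _ => 1 / N,
    isSociallyOptimal_uniform (by omega) hcost hconv zero_le_one,
    isEquilibrium_pi_single_tailCost hN hcost hconv
      ((monotoneOn_polyCost hc.le n).mono Icc_subset_Ici_self)
      (continuous_polyCost c n).continuousOn zero_le_one _, ?_⟩
  · exact add_pos_of_pos_of_nonneg hc (pow_nonneg ht.1 n)
  · exact ((pow_left_strictMonoOn₀ hn).mono Icc_subset_Ici_self).const_add c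
  · exact ((convexOn_const c (convex_Ici 0)).add (convexOn_pow n)).subset Icc_subset_Ici_self
      (convex_Icc 0 1)
  rw [totalCost_pi_single, totalCost_const, integral_const_add_pow, integral_const_add_pow]
  have hopt : (N : ℝ) * polyCost c n (1 / N) = 2 * c := by
    rw [polyCost, one_div, inv_pow, pow_succ]
    field_simp
    linear_combination -hcN
  calc M * (N * polyCost c n (1 / N)) = 2 * M * c := by rw [hopt]; ring
    _ ≤ N ^ n * c := by gcongr
    _ = 1 / (n + 1) := by field_simp; linear_combination hcN
    _ ≤ polyCost c n 1 := by simp [polyCost, hc.le]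

/-- For every `N ≥ 2` and `M > 0` there is an oligopoly pricing game with
convex (positive, continuous, strictly increasing) marginal cost functions possessing an
equilibrium whose cost is at least `M` times the socially optimal cost. -/
theorem convex_price_of_anarchy_unbounded
    (N : ℕ) (hN : 2 ≤ N) (M : ℝ) (hM : 0 < M) :
    ∃ (Rs : ℝ) (lam : Fin N → ℝ → ℝ), 0 < Rs ∧
      (∀ i, (∀ t ∈ Set.Icc (0:ℝ) Rs, 0 < lam i t) ∧
        ContinuousOn (lam i) (Set.Icc 0 Rs) ∧
        StrictMonoOn (lam i) (Set.Icc 0 Rs) ∧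
        ConvexOn ℝ (Set.Icc 0 Rs) (lam i)) ∧
      ∃ (B : Fin N → ℝ → ℝ) (f ropt : Fin N → ℝ),
        IsSociallyOptimal N Rs lam ropt ∧
        IsEquilibrium N Rs lam B f ∧
        M * totalCost N lam ropt ≤ totalCost N lam f :=
  convex_price_of_anarchy_unbounded_general N hN M
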